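/- Let P be an ergodic (irreducible and aperiodic) stochastic matrix on finite Ω with every diagonal entry positive on reachable states, arising as a product of Gibbs update matrices of a strictly positive distribution π. If the single-site random-update chain P_{RU} is irreducible, then the alternating-scan chain P_{AS} = ∏_{x∈V₁}T_x ∏_{y∈V₂}T_y is irreducible and aperiodic. -/

import Mathlib

open Finset

open Finset

open Classical in
/-- The single-variable Gibbs update matrix at `x`: resample coordinate `x`
conditioned on the others. -/
noncomputable def gibbsT {V S : Type*} [Fintype V] [Fintype S] [DecidableEq V]
    (π : (V → S) → ℝ) (x : V) : Matrix (V → S) (V → S) ℝ :=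
  fun σ τ =>
    if ∃ s : S, τ = Function.update σ x s
    then π τ / ∑ t : S, π (Function.update σ x t)
    else 0

section Scan

variable {n₁ n₂ : ℕ} {S : Type*} [Fintype S] [DecidableEq S]

/-- The alternating-scan kernel: sweep the first class, then the second. -/
noncomputable def PAS (π : (Fin n₁ ⊕ Fin n₂ → S) → ℝ) :
    Matrix (Fin n₁ ⊕ Fin n₂ → S) (Fin n₁ ⊕ Fin n₂ → S) ℝ :=
  (List.ofFn fun i : Fin n₁ => gibbsT π (Sum.inl i)).prod *
  (List.ofFn fun j : Fin n₂ => gibbsT π (Sum.inr j)).prod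

/-- The lazy random-update Gibbs kernel. -/
noncomputable def PRU (π : (Fin n₁ ⊕ Fin n₂ → S) → ℝ) :
    Matrix (Fin n₁ ⊕ Fin n₂ → S) (Fin n₁ ⊕ Fin n₂ → S) ℝ :=
  (1 / 2 : ℝ) • 1 + (1 / (2 * (n₁ + n₂)) : ℝ) • ∑ x : Fin n₁ ⊕ Fin n₂, gibbsT π x

end Scan

section Aux

variable {V S : Type*} [Fintype V] [Fintype S] [DecidableEq V]

lemma gibbsT_nonneg (π : (V → S) → ℝ) (h : ∀ σ, 0 ≤ π σ) (x : V) (σ τ : V → S) :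
    0 ≤ gibbsT π x σ τ := by
  simp only [gibbsT]
  split_ifs
  · exact div_nonneg (h τ) (Finset.sum_nonneg fun t _ => h _)
  · exact le_refl 0

lemma gibbsT_diag_pos (π : (V → S) → ℝ) (h : ∀ σ, 0 ≤ π σ) (x : V) (σ : V → S)
    (hσ : 0 < π σ) : 0 < gibbsT π x σ σ := by
  have hex : ∃ s, σ = Function.update σ x s := ⟨σ x, (Function.update_eq_self x σ).symm⟩
  simp only [gibbsT, if_pos hex]
  refine div_pos hσ (Finset.sum_pos' (fun t _ => h _) ?_)
  exact ⟨σ x, Finset.mem_univ _, by rwa [Function.update_eq_self]⟩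

lemma gibbsT_pos_target (π : (V → S) → ℝ) (h : ∀ σ, 0 ≤ π σ) {x : V} {σ τ : V → S}
    (hp : 0 < gibbsT π x σ τ) : 0 < π τ := by
  rcases (h τ).lt_or_eq with h' | h'
  · exact h'
  · exfalso
    simp only [gibbsT, ← h', zero_div] at hp
    split_ifs at hp <;> exact lt_irrefl 0 hp

end Aux

section MatAux

variable {Ω : Type*} [Fintype Ω] [DecidableEq Ω]

lemma mul_entry_nonneg {A B : Matrix Ω Ω ℝ} (hA : ∀ a b, 0 ≤ A a b)
    (hB : ∀ a b, 0 ≤ B a b) (a b : Ω) : 0 ≤ (A * B) a b := by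
  rw [Matrix.mul_apply]
  exact Finset.sum_nonneg fun i _ => mul_nonneg (hA _ _) (hB _ _)

lemma mul_entry_pos {A B : Matrix Ω Ω ℝ} (hA : ∀ a b, 0 ≤ A a b)
    (hB : ∀ a b, 0 ≤ B a b) {σ ρ τ : Ω} (h1 : 0 < A σ ρ) (h2 : 0 < B ρ τ) :
    0 < (A * B) σ τ := by
  rw [Matrix.mul_apply]
  exact Finset.sum_pos' (fun i _ => mul_nonneg (hA _ _) (hB _ _))
    ⟨ρ, Finset.mem_univ _, mul_pos h1 h2⟩

lemma one_entry_nonneg (a b : Ω) : 0 ≤ (1 : Matrix Ω Ω ℝ) a b := by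
  by_cases h : a = b <;> simp [Matrix.one_apply, h]

lemma list_prod_nonneg :
    ∀ (L : List (Matrix Ω Ω ℝ)), (∀ A ∈ L, ∀ a b, 0 ≤ A a b) →
      ∀ a b, 0 ≤ L.prod a b := by
  intro L
  induction L with
  | nil => intro _ a b; rw [List.prod_nil]; exact one_entry_nonneg a b
  | cons A L ih =>
      intro h a b
      rw [List.prod_cons]
      exact mul_entry_nonneg (h A (List.mem_cons_self))
        (ih fun B hB => h B (List.mem_cons_of_mem _ hB)) a b

lemma pow_entry_nonneg {A : Matrix Ω Ω ℝ} (hA : ∀ a b, 0 ≤ A a b) :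
    ∀ (t : ℕ) (a b : Ω), 0 ≤ (A ^ t) a b := by
  intro t
  induction t with
  | zero => intro a b; rw [pow_zero]; exact one_entry_nonneg a b
  | succ t ih => intro a b; rw [pow_succ]; exact mul_entry_nonneg ih hA a b

lemma list_prod_entry_pos :
    ∀ (L : List (Matrix Ω Ω ℝ)) (σ τ : Ω),
      (∀ A ∈ L, ∀ a b, 0 ≤ A a b) →
      (∀ A ∈ L, 0 < A σ σ) → (∀ A ∈ L, 0 < A τ τ) →
      (σ = τ ∨ ∃ A ∈ L, 0 < A σ τ) → 0 < L.prod σ τ := by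
  intro L
  induction L with
  | nil =>
      intro σ τ _ _ _ hstep
      rcases hstep with rfl | ⟨A, hA, _⟩
      · simp [Matrix.one_apply]
      · exact absurd hA List.not_mem_nil
  | cons A L ih =>
      intro σ τ hnn hdσ hdτ hstep
      have hnn' : ∀ B ∈ L, ∀ a b, 0 ≤ B a b := fun B hB => hnn B (List.mem_cons_of_mem _ hB)
      have hAnn : ∀ a b, 0 ≤ A a b := hnn A (List.mem_cons_self)
      have hLnn := list_prod_nonneg L hnn'
      rw [List.prod_cons]
      rcases hstep with rfl | ⟨B, hB, hBpos⟩
      · exact mul_entry_pos hAnn hLnn (hdσ A (List.mem_cons_self))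
          (ih σ σ hnn' (fun B hB => hdσ B (List.mem_cons_of_mem _ hB))
            (fun B hB => hdσ B (List.mem_cons_of_mem _ hB)) (Or.inl rfl))
      · rcases List.mem_cons.mp hB with rfl | hBL
        · exact mul_entry_pos hAnn hLnn hBpos
            (ih τ τ hnn' (fun C hC => hdτ C (List.mem_cons_of_mem _ hC))
              (fun C hC => hdτ C (List.mem_cons_of_mem _ hC)) (Or.inl rfl))
        · exact mul_entry_pos hAnn hLnn (hdσ A (List.mem_cons_self))
            (ih σ τ hnn' (fun C hC => hdσ C (List.mem_cons_of_mem _ hC))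
              (fun C hC => hdτ C (List.mem_cons_of_mem _ hC)) (Or.inr ⟨B, hBL, hBpos⟩))

end MatAux

section Main

variable {n₁ n₂ : ℕ} {S : Type*} [Fintype S] [DecidableEq S]

lemma PAS_entry_pos (π : (Fin n₁ ⊕ Fin n₂ → S) → ℝ) (hπ : ∀ σ, 0 ≤ π σ)
    {σ τ : Fin n₁ ⊕ Fin n₂ → S} (hσ : 0 < π σ) (hτ : 0 < π τ)
    (hstep : σ = τ ∨ ∃ x, 0 < gibbsT π x σ τ) : 0 < PAS π σ τ := by
  set L₁ := List.ofFn fun i : Fin n₁ => gibbsT π (Sum.inl i) with hL₁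
  set L₂ := List.ofFn fun j : Fin n₂ => gibbsT π (Sum.inr j) with hL₂
  have hmem₁ : ∀ A ∈ L₁, ∃ x, A = gibbsT π x := by
    intro A hA
    obtain ⟨i, hi⟩ := List.mem_ofFn.mp hA
    exact ⟨Sum.inl i, hi.symm⟩
  have hmem₂ : ∀ A ∈ L₂, ∃ x, A = gibbsT π x := by
    intro A hA
    obtain ⟨j, hj⟩ := List.mem_ofFn.mp hA
    exact ⟨Sum.inr j, hj.symm⟩
  have hnn₁ : ∀ A ∈ L₁, ∀ a b, 0 ≤ A a b := by
    intro A hA; obtain ⟨x, rfl⟩ := hmem₁ A hA; exact gibbsT_nonneg π hπ x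
  have hnn₂ : ∀ A ∈ L₂, ∀ a b, 0 ≤ A a b := by
    intro A hA; obtain ⟨x, rfl⟩ := hmem₂ A hA; exact gibbsT_nonneg π hπ x
  have hd₁ : ∀ ρ : Fin n₁ ⊕ Fin n₂ → S, 0 < π ρ → ∀ A ∈ L₁, 0 < A ρ ρ := by
    intro ρ hρ A hA; obtain ⟨x, rfl⟩ := hmem₁ A hA; exact gibbsT_diag_pos π hπ x ρ hρ
  have hd₂ : ∀ ρ : Fin n₁ ⊕ Fin n₂ → S, 0 < π ρ → ∀ A ∈ L₂, 0 < A ρ ρ := by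
    intro ρ hρ A hA; obtain ⟨x, rfl⟩ := hmem₂ A hA; exact gibbsT_diag_pos π hπ x ρ hρ
  have hLnn₁ := list_prod_nonneg L₁ hnn₁
  have hLnn₂ := list_prod_nonneg L₂ hnn₂
  rw [PAS]
  rcases hstep with rfl | ⟨x, hx⟩
  · exact mul_entry_pos hLnn₁ hLnn₂
      (list_prod_entry_pos L₁ σ σ hnn₁ (hd₁ σ hσ) (hd₁ σ hσ) (Or.inl rfl))
      (list_prod_entry_pos L₂ σ σ hnn₂ (hd₂ σ hσ) (hd₂ σ hσ) (Or.inl rfl))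
  · rcases x with i | j
    · have hmem : gibbsT π (Sum.inl i) ∈ L₁ := by
        rw [hL₁, List.mem_ofFn]; exact ⟨i, rfl⟩
      exact mul_entry_pos hLnn₁ hLnn₂
        (list_prod_entry_pos L₁ σ τ hnn₁ (hd₁ σ hσ) (hd₁ τ hτ)
          (Or.inr ⟨gibbsT π (Sum.inl i), hmem, hx⟩))
        (list_prod_entry_pos L₂ τ τ hnn₂ (hd₂ τ hτ) (hd₂ τ hτ) (Or.inl rfl))
    · have hmem : gibbsT π (Sum.inr j) ∈ L₂ := by
        rw [hL₂, List.mem_ofFn]; exact ⟨j, rfl⟩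
      exact mul_entry_pos hLnn₁ hLnn₂
        (list_prod_entry_pos L₁ σ σ hnn₁ (hd₁ σ hσ) (hd₁ σ hσ) (Or.inl rfl))
        (list_prod_entry_pos L₂ σ τ hnn₂ (hd₂ σ hσ) (hd₂ τ hτ)
          (Or.inr ⟨gibbsT π (Sum.inr j), hmem, hx⟩))

lemma PAS_nonneg (π : (Fin n₁ ⊕ Fin n₂ → S) → ℝ) (hπ : ∀ σ, 0 ≤ π σ)
    (a b : Fin n₁ ⊕ Fin n₂ → S) : 0 ≤ PAS π a b := by
  rw [PAS]
  refine mul_entry_nonneg (list_prod_nonneg _ ?_) (list_prod_nonneg _ ?_) a b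
  · intro A hA
    obtain ⟨i, hi⟩ := List.mem_ofFn.mp hA
    exact hi ▸ gibbsT_nonneg π hπ _
  · intro A hA
    obtain ⟨j, hj⟩ := List.mem_ofFn.mp hA
    exact hj ▸ gibbsT_nonneg π hπ _

lemma PRU_nonneg (π : (Fin n₁ ⊕ Fin n₂ → S) → ℝ) (hπ : ∀ σ, 0 ≤ π σ)
    (a b : Fin n₁ ⊕ Fin n₂ → S) : 0 ≤ PRU π a b := by
  rw [PRU]
  simp only [Matrix.add_apply, Matrix.smul_apply, Matrix.sum_apply, smul_eq_mul]
  have h1 : (0:ℝ) ≤ 1 / 2 * (1 : Matrix _ _ ℝ) a b :=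
    mul_nonneg (by norm_num) (one_entry_nonneg a b)
  have h2 : (0:ℝ) ≤ 1 / (2 * (n₁ + n₂)) * ∑ x : Fin n₁ ⊕ Fin n₂, gibbsT π x a b := by
    refine mul_nonneg (by positivity) (Finset.sum_nonneg fun x _ => gibbsT_nonneg π hπ x a b)
  exact add_nonneg h1 h2

lemma PRU_pos_cases (π : (Fin n₁ ⊕ Fin n₂ → S) → ℝ) (hπ : ∀ σ, 0 ≤ π σ)
    {σ τ : Fin n₁ ⊕ Fin n₂ → S} (h : 0 < PRU π σ τ) :
    σ = τ ∨ ∃ x, 0 < gibbsT π x σ τ := by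
  by_contra hc
  push_neg at hc
  obtain ⟨hne, hx⟩ := hc
  have : PRU π σ τ = 0 := by
    rw [PRU]
    simp only [Matrix.add_apply, Matrix.smul_apply, Matrix.sum_apply, smul_eq_mul,
      Matrix.one_apply_ne hne, mul_zero, zero_add]
    have hsum : ∑ x : Fin n₁ ⊕ Fin n₂, gibbsT π x σ τ = 0 :=
      Finset.sum_eq_zero fun x _ =>
        le_antisymm (hx x) (gibbsT_nonneg π hπ x σ τ)
    rw [hsum, mul_zero]
  rw [this] at h
  exact lt_irrefl 0 h

end Main

/-- if the single-site random-update chain P_RU is irreducible on the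
support of π, then the alternating-scan chain P_AS is irreducible on the support and
aperiodic (every diagonal entry on the support is positive). -/
theorem scan_ergodic_of_random_update_irreducible
    {n₁ n₂ : ℕ} {S : Type*} [Fintype S] [DecidableEq S]
    (π : (Fin n₁ ⊕ Fin n₂ → S) → ℝ)
    (hπnonneg : ∀ σ, 0 ≤ π σ) (hπsum : ∑ σ, π σ = 1)
    (hirr : ∀ σ τ : Fin n₁ ⊕ Fin n₂ → S,
      0 < π σ → 0 < π τ → ∃ t : ℕ, 0 < (PRU π ^ t) σ τ) :
    (∀ σ τ : Fin n₁ ⊕ Fin n₂ → S,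
      0 < π σ → 0 < π τ → ∃ t : ℕ, 0 < (PAS π ^ t) σ τ) ∧
    (∀ σ : Fin n₁ ⊕ Fin n₂ → S, 0 < π σ → 0 < PAS π σ σ) := by

  have hPASnn := PAS_nonneg π hπnonneg
  have hPRUnn := PRU_nonneg π hπnonneg
  have key : ∀ (t : ℕ) (σ τ : Fin n₁ ⊕ Fin n₂ → S), 0 < π σ →
      0 < (PRU π ^ t) σ τ → ∃ s : ℕ, 0 < (PAS π ^ s) σ τ := by
    intro t
    induction t with
    | zero =>
        intro σ τ hσ h
        rw [pow_zero] at h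
        have : σ = τ := by
          by_contra hne
          rw [Matrix.one_apply_ne hne] at h
          exact lt_irrefl 0 h
        subst this
        exact ⟨0, by simp [Matrix.one_apply]⟩
    | succ t ih =>
        intro σ τ hσ h
        rw [pow_succ'] at h
        rw [Matrix.mul_apply] at h
        have hex : ∃ ρ, 0 < PRU π σ ρ * (PRU π ^ t) ρ τ := by
          by_contra hc
          push_neg at hc
          have : ∑ ρ, PRU π σ ρ * (PRU π ^ t) ρ τ = 0 :=
            Finset.sum_eq_zero fun ρ _ => le_antisymm (hc ρ)
              (mul_nonneg (hPRUnn σ ρ) (pow_entry_nonneg hPRUnn t ρ τ))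
          rw [this] at h
          exact lt_irrefl 0 h
        obtain ⟨ρ, hρ⟩ := hex
        have h1 : 0 < PRU π σ ρ := by
          rcases (hPRUnn σ ρ).lt_or_eq with h' | h'
          · exact h'
          · rw [← h', zero_mul] at hρ; exact absurd hρ (lt_irrefl 0)
        have h2 : 0 < (PRU π ^ t) ρ τ := by
          rcases (pow_entry_nonneg hPRUnn t ρ τ).lt_or_eq with h' | h'
          · exact h'
          · rw [← h', mul_zero] at hρ; exact absurd hρ (lt_irrefl 0)
        rcases PRU_pos_cases π hπnonneg h1 with rfl | ⟨x, hx⟩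
        · exact ih σ τ hσ h2
        · have hρpos : 0 < π ρ := gibbsT_pos_target π hπnonneg hx
          obtain ⟨s, hs⟩ := ih ρ τ hρpos h2
          refine ⟨s + 1, ?_⟩
          rw [pow_succ', Matrix.mul_apply]
          exact Finset.sum_pos'
            (fun i _ => mul_nonneg (hPASnn σ i) (pow_entry_nonneg hPASnn s i τ))
            ⟨ρ, Finset.mem_univ _,
              mul_pos (PAS_entry_pos π hπnonneg hσ hρpos (Or.inr ⟨x, hx⟩)) hs⟩
  constructor
  · intro σ τ hσ hτ
    obtain ⟨t, ht⟩ := hirr σ τ hσ hτ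
    exact key t σ τ hσ ht
  · intro σ hσ
    exact PAS_entry_pos π hπnonneg hσ hσ (Or.inl rfl)
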